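/- There exists a sequence of Boolean functions f_k (on (2k+1)^2 variables) with s(f_k) → ∞ and bs(f_k) = (1/2)s(f_k)^2 + (1/2)s(f_k) for all k; in particular the separation bs(f) = Θ(s(f)^2) is achievable. -/

import Mathlib

def flipS {n : ℕ} (w : Fin n → Bool) (S : Finset (Fin n)) : Fin n → Bool :=
  fun i => if i ∈ S then !(w i) else w i

def sensAt {n : ℕ} (f : (Fin n → Bool) → Bool) (w : Fin n → Bool) : ℕ :=
  (Finset.univ.filter (fun i => f (flipS w {i}) ≠ f w)).card

def sens {n : ℕ} (f : (Fin n → Bool) → Bool) : ℕ :=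
  Finset.univ.sup (fun w => sensAt f w)

noncomputable def bsAt {n : ℕ} (f : (Fin n → Bool) → Bool) (w : Fin n → Bool) : ℕ :=
  sSup {k | ∃ B : Fin k → Finset (Fin n), (∀ j, (B j).Nonempty) ∧
    (∀ j₁ j₂, j₁ ≠ j₂ → Disjoint (B j₁) (B j₂)) ∧ (∀ j, f (flipS w (B j)) ≠ f w)}

noncomputable def bs {n : ℕ} (f : (Fin n → Bool) → Bool) : ℕ :=
  Finset.univ.sup (fun w => bsAt f w)
def secIdx (k : ℕ) (s p : Fin (2*k+1)) : Fin ((2*k+1)^2) :=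
  ⟨s.val * (2*k+1) + p.val, by have := s.isLt; have := p.isLt; nlinarith⟩

def sectionOf (k : ℕ) (w : Fin ((2*k+1)^2) → Bool) (s : Fin (2*k+1)) : Fin (2*k+1) → Bool :=
  fun p => w (secIdx k s p)

def goodSection (k : ℕ) (x : Fin (2*k+1) → Bool) : Prop :=
  (∃ i < k, ∀ j : Fin (2*k+1), x j = decide (j.val = 2*i ∨ j.val = 2*i+1)) ∨
  (∀ j : Fin (2*k+1), x j = decide (j.val = 2*k))

instance (k : ℕ) (x : Fin (2*k+1) → Bool) : Decidable (goodSection k x) := by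
  unfold goodSection; infer_instance

def goodF (k : ℕ) : (Fin ((2*k+1)^2) → Bool) → Bool :=
  fun w => decide (∃ s : Fin (2*k+1), goodSection k (sectionOf k w s))

/-!
View the sections of an input as words of `Fin (2k+1) → Bool` and the good sections as a code
of `k+1` words. The code has minimum Hamming distance 3, so at most one single-bit flip of
a word lands in the code. Hence at a 0-input every section carries at most one sensitive
bit, while at a 1-input only the bits of one good section are sensitive: `s(f_k) ≤ 2k+1`, with
equality where every section is one flip away from a codeword.

The codewords have pairwise disjoint nonempty supports, so at the all-zero input the
`(2k+1)(k+1)` blocks "write codeword `a` into section `s`" are disjoint and sensitive. Conversely,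
sensitive blocks at a 0-input inject into (section, codeword) pairs, and at a 1-input each of them
meets the good section. Thus `bs(f_k) = (2k+1)(k+1) = (s(f_k)² + s(f_k)) / 2`.
-/

open Finset Function

section Flip

variable {n : ℕ}

@[simp] lemma flipS_empty (x : Fin n → Bool) : flipS x ∅ = x := by
  funext i; simp [flipS]

lemma flipS_flipS (x : Fin n → Bool) (T : Finset (Fin n)) : flipS (flipS x T) T = x := by
  funext i; by_cases hi : i ∈ T <;> simp [flipS, hi]

lemma flipS_apply_ne_iff {x : Fin n → Bool} {T : Finset (Fin n)} {i : Fin n} :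
    flipS x T i ≠ x i ↔ i ∈ T := by
  by_cases hi : i ∈ T <;> simp [flipS, hi]

lemma flipS_injective (x : Fin n → Bool) : Injective (flipS x) := by
  intro T T' h
  ext i
  rw [← flipS_apply_ne_iff, ← flipS_apply_ne_iff (T := T'), h]

lemma hammingDist_flipS (x : Fin n → Bool) (T : Finset (Fin n)) :
    hammingDist x (flipS x T) = #T := by
  simp only [hammingDist, ne_comm (a := x _), flipS_apply_ne_iff, filter_mem_eq_inter, univ_inter]

def ones (x : Fin n → Bool) : Finset (Fin n) := {i | x i = true}

lemma flipS_false_ones (x : Fin n → Bool) : flipS (fun _ => false) (ones x) = x := by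
  funext i; cases h : x i <;> simp [flipS, ones, h]

end Flip

section Codes

variable {m : ℕ} {ι : Type*} {c : ι → Fin m → Bool}

lemma eq_of_flipS_singleton_eq (hc : Pairwise fun a b => 3 ≤ hammingDist (c a) (c b))
    {x : Fin m → Bool} {p q : Fin m} {a b : ι}
    (hp : flipS x {p} = c a) (hq : flipS x {q} = c b) : p = q := by
  have hab : a = b := by
    by_contra hab
    have h₁ : hammingDist (c a) x = 1 := by
      rw [← hp, hammingDist_comm, hammingDist_flipS, card_singleton]
    have h₂ : hammingDist x (c b) = 1 := by rw [← hq, hammingDist_flipS, card_singleton]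
    have := hammingDist_triangle (c a) x (c b)
    have := hc hab
    omega
  subst hab
  exact singleton_injective (flipS_injective x (hp.trans hq.symm))

lemma flipS_singleton_ne (hc : Pairwise fun a b => 3 ≤ hammingDist (c a) (c b))
    (a b : ι) (p : Fin m) : flipS (c a) {p} ≠ c b := by
  intro h
  have hd := hammingDist_flipS (c a) {p}
  rw [h, card_singleton] at hd
  by_cases hab : a = b
  · simp [hab] at hd
  · have := hc hab
    omega

end Codes

section Blocks

variable {n : ℕ} {κ : Type*}

def IsSensitiveBlocks (f : (Fin n → Bool) → Bool) (w : Fin n → Bool)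
    (B : κ → Finset (Fin n)) : Prop :=
  (∀ j, (B j).Nonempty) ∧ Pairwise (Disjoint on B) ∧ ∀ j, f (flipS w (B j)) ≠ f w

lemma injective_of_pairwise_disjoint {α : Type*} {B : κ → Finset α}
    (hB : Pairwise (Disjoint on B)) {φ : κ → α} (hφ : ∀ j, φ j ∈ B j) :
    Injective φ := by
  intro j j' h
  by_contra hne
  exact disjoint_left.1 (hB hne) (hφ j) (h ▸ hφ j')

namespace IsSensitiveBlocks

variable {f : (Fin n → Bool) → Bool} {w : Fin n → Bool} {B : κ → Finset (Fin n)}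

lemma comp (hB : IsSensitiveBlocks f w B) {κ' : Type*} {e : κ' → κ} (he : Injective e) :
    IsSensitiveBlocks f w (B ∘ e) :=
  ⟨fun j => hB.1 (e j), fun _ _ h => hB.2.1 (he.ne h), fun j => hB.2.2 (e j)⟩

lemma card_le [Fintype κ] (hB : IsSensitiveBlocks f w B) : Fintype.card κ ≤ n := by
  choose φ hφ using hB.1
  simpa using Fintype.card_le_of_injective φ (injective_of_pairwise_disjoint hB.2.1 hφ)

lemma le_bsAt [Fintype κ] (hB : IsSensitiveBlocks f w B) : Fintype.card κ ≤ bsAt f w :=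
  le_csSup ⟨n, fun _ ⟨_, hB'⟩ => by simpa using card_le (B := _) hB'⟩
    ⟨_, hB.comp (Fintype.equivFin κ).symm.injective⟩

end IsSensitiveBlocks

lemma bsAt_le {f : (Fin n → Bool) → Bool} {w : Fin n → Bool} {N : ℕ}
    (h : ∀ m (B : Fin m → Finset (Fin n)), IsSensitiveBlocks f w B → m ≤ N) :
    bsAt f w ≤ N :=
  csSup_le' fun m ⟨B, hB⟩ => h m B hB

end Blocks

section Sections

variable {k : ℕ}

def secEquiv (k : ℕ) : Fin (2*k+1) × Fin (2*k+1) ≃ Fin ((2*k+1)^2) :=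
  finProdFinEquiv.trans (finCongr (sq _).symm)

@[simp] lemma secEquiv_apply (s p : Fin (2*k+1)) : secEquiv k (s, p) = secIdx k s p :=
  Fin.ext (by simp [secEquiv, secIdx, finProdFinEquiv]; ring)

@[simp] lemma secEquiv_symm_secIdx (s p : Fin (2*k+1)) :
    (secEquiv k).symm (secIdx k s p) = (s, p) :=
  (secEquiv k).symm_apply_eq.2 (secEquiv_apply s p).symm

lemma secIdx_inj {s s' p p' : Fin (2*k+1)} :
    secIdx k s p = secIdx k s' p' ↔ s = s' ∧ p = p' := by
  rw [← secEquiv_apply, ← secEquiv_apply, (secEquiv k).injective.eq_iff, Prod.mk.injEq]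

def sectionPart (k : ℕ) (S : Finset (Fin ((2*k+1)^2))) (s : Fin (2*k+1)) : Finset (Fin (2*k+1)) :=
  {p | secIdx k s p ∈ S}

@[simp] lemma mem_sectionPart {S : Finset (Fin ((2*k+1)^2))} {s p : Fin (2*k+1)} :
    p ∈ sectionPart k S s ↔ secIdx k s p ∈ S := by
  simp [sectionPart]

lemma sectionOf_flipS (w : Fin ((2*k+1)^2) → Bool) (S : Finset (Fin ((2*k+1)^2)))
    (s : Fin (2*k+1)) :
    sectionOf k (flipS w S) s = flipS (sectionOf k w s) (sectionPart k S s) := by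
  funext p
  simp [sectionOf, flipS]

lemma disjoint_sectionPart {S S' : Finset (Fin ((2*k+1)^2))} (h : Disjoint S S')
    (s : Fin (2*k+1)) : Disjoint (sectionPart k S s) (sectionPart k S' s) :=
  disjoint_left.2 fun _ hp hp' => disjoint_left.1 h (mem_sectionPart.1 hp) (mem_sectionPart.1 hp')

lemma sectionPart_image (s : Fin (2*k+1)) (T : Finset (Fin (2*k+1))) (s' : Fin (2*k+1)) :
    sectionPart k (T.image (secIdx k s)) s' = if s' = s then T else ∅ := by
  ext p
  split_ifs with h
  · subst h; simp [secIdx_inj]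
  · simp [secIdx_inj, Ne.symm h]

lemma sectionOf_flipS_image (w : Fin ((2*k+1)^2) → Bool) (s : Fin (2*k+1))
    (T : Finset (Fin (2*k+1))) :
    sectionOf k (flipS w (T.image (secIdx k s))) =
      update (sectionOf k w) s (flipS (sectionOf k w s) T) := by
  funext s'
  rw [sectionOf_flipS, sectionPart_image]
  by_cases h : s' = s
  · subst h; simp
  · simp [h]

end Sections

section SectionCode

variable {k : ℕ} {ι : Type*} [Fintype ι] {c : ι → Fin (2*k+1) → Bool}

def sectionCodeF (k : ℕ) (c : ι → Fin (2*k+1) → Bool) (w : Fin ((2*k+1)^2) → Bool) :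
    Bool :=
  decide (∃ s a, sectionOf k w s = c a)

lemma sectionCodeF_eq_true_iff {w : Fin ((2*k+1)^2) → Bool} :
    sectionCodeF k c w = true ↔ ∃ s a, sectionOf k w s = c a := by
  simp [sectionCodeF]

lemma sectionCodeF_eq_false_iff {w : Fin ((2*k+1)^2) → Bool} :
    sectionCodeF k c w = false ↔ ∀ s a, sectionOf k w s ≠ c a := by
  simp [sectionCodeF]

lemma sensAt_eq_card_pairs (f : (Fin ((2*k+1)^2) → Bool) → Bool)
    (w : Fin ((2*k+1)^2) → Bool) :
    sensAt f w = #{sp : Fin (2*k+1) × Fin (2*k+1) | f (flipS w {secIdx k sp.1 sp.2}) ≠ f w} :=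
  card_equiv (secEquiv k).symm fun i => by
    obtain ⟨⟨s, p⟩, rfl⟩ := (secEquiv k).surjective i
    simp

lemma sectionOf_flipS_secIdx {w : Fin ((2*k+1)^2) → Bool} {s p : Fin (2*k+1)} :
    sectionOf k (flipS w {secIdx k s p}) =
      update (sectionOf k w) s (flipS (sectionOf k w s) {p}) := by
  rw [← image_singleton, sectionOf_flipS_image]

lemma eq_of_sensitive_of_sectionOf_eq {w : Fin ((2*k+1)^2) → Bool} {t : Fin (2*k+1)} {a : ι}
    (ht : sectionOf k w t = c a) {s p : Fin (2*k+1)}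
    (hsens : sectionCodeF k c (flipS w {secIdx k s p}) ≠ sectionCodeF k c w) : s = t := by
  by_contra hst
  apply hsens
  rw [sectionCodeF_eq_true_iff.2 ⟨t, a, ht⟩, sectionCodeF_eq_true_iff]
  exact ⟨t, a, by rw [sectionOf_flipS_secIdx, update_of_ne (Ne.symm hst), ht]⟩

lemma exists_flipS_eq_of_sensitive {w : Fin ((2*k+1)^2) → Bool}
    (hw : sectionCodeF k c w = false) {s p : Fin (2*k+1)}
    (hsens : sectionCodeF k c (flipS w {secIdx k s p}) ≠ sectionCodeF k c w) :
    ∃ a, flipS (sectionOf k w s) {p} = c a := by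
  rw [hw, ne_eq, Bool.not_eq_false, sectionCodeF_eq_true_iff] at hsens
  obtain ⟨s', a, hs'⟩ := hsens
  rw [sectionOf_flipS_secIdx] at hs'
  by_cases hss : s' = s
  · subst hss
    exact ⟨a, by simpa using hs'⟩
  · rw [update_of_ne hss] at hs'
    exact absurd hs' (sectionCodeF_eq_false_iff.1 hw s' a)

lemma sensAt_sectionCodeF_le (hc : Pairwise fun a b => 3 ≤ hammingDist (c a) (c b))
    (w : Fin ((2*k+1)^2) → Bool) : sensAt (sectionCodeF k c) w ≤ 2*k+1 := by
  rw [sensAt_eq_card_pairs]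
  suffices ∃ g : Fin (2*k+1) × Fin (2*k+1) → Fin (2*k+1),
      Set.InjOn g {sp | sectionCodeF k c (flipS w {secIdx k sp.1 sp.2}) ≠ sectionCodeF k c w} by
    obtain ⟨g, hg⟩ := this
    simpa using card_le_card_of_injOn g (fun _ _ => mem_univ _) (by simpa using hg)
  rcases Bool.eq_false_or_eq_true (sectionCodeF k c w) with hw | hw
  · obtain ⟨t, a, ht⟩ := sectionCodeF_eq_true_iff.1 hw
    refine ⟨Prod.snd, ?_⟩
    rintro ⟨s, p⟩ hsp ⟨s', q⟩ hsq (rfl : p = q)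
    rw [eq_of_sensitive_of_sectionOf_eq (s := s) ht hsp,
      eq_of_sensitive_of_sectionOf_eq (s := s') ht hsq]
  · refine ⟨Prod.fst, ?_⟩
    rintro ⟨s, p⟩ hsp ⟨s', q⟩ hsq (rfl : s = s')
    obtain ⟨a, ha⟩ := exists_flipS_eq_of_sensitive (s := s) (p := p) hw hsp
    obtain ⟨b, hb⟩ := exists_flipS_eq_of_sensitive (s := s) (p := q) hw hsq
    rw [eq_of_flipS_singleton_eq hc ha hb]

lemma le_sensAt_sectionCodeF (hc : Pairwise fun a b => 3 ≤ hammingDist (c a) (c b)) (a₀ : ι) :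
    2*k+1 ≤ sensAt (sectionCodeF k c) fun i => flipS (c a₀) {0} ((secEquiv k).symm i).2 := by
  set w : Fin ((2*k+1)^2) → Bool := fun i => flipS (c a₀) {0} ((secEquiv k).symm i).2
  have hsec : ∀ s, sectionOf k w s = flipS (c a₀) {0} := fun s => by
    funext p; simp [w, sectionOf]
  have hw : sectionCodeF k c w = false :=
    sectionCodeF_eq_false_iff.2 fun s a => hsec s ▸ flipS_singleton_ne hc a₀ a 0
  have hflip : ∀ s, sectionCodeF k c (flipS w {secIdx k s 0}) = true := fun s =>
    sectionCodeF_eq_true_iff.2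
      ⟨s, a₀, by rw [sectionOf_flipS_secIdx, update_self, hsec, flipS_flipS]⟩
  rw [sensAt_eq_card_pairs]
  calc 2*k+1 = #(univ ×ˢ {(0 : Fin (2*k+1))}) := by simp
    _ ≤ _ := card_le_card fun ⟨s, p⟩ hsp => by
      obtain rfl : 0 = p := by simpa using hsp
      simp [hw, hflip]

lemma sens_sectionCodeF [Nonempty ι] (hc : Pairwise fun a b => 3 ≤ hammingDist (c a) (c b)) :
    sens (sectionCodeF k c) = 2*k+1 :=
  le_antisymm (Finset.sup_le fun w _ => sensAt_sectionCodeF_le hc w)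
    (le_sup_of_le (mem_univ _) (le_sensAt_sectionCodeF hc (Classical.arbitrary ι)))

lemma IsSensitiveBlocks.card_le_of_sectionCodeF {κ : Type*} [Fintype κ]
    {w : Fin ((2*k+1)^2) → Bool} {B : κ → Finset (Fin ((2*k+1)^2))}
    (hB : IsSensitiveBlocks (sectionCodeF k c) w B) :
    Fintype.card κ ≤ (2*k+1) * Fintype.card ι := by
  obtain ⟨hne, hdisj, hsens⟩ := hB
  rcases Bool.eq_false_or_eq_true (sectionCodeF k c w) with hw | hw
  · obtain ⟨t, a, ht⟩ := sectionCodeF_eq_true_iff.1 hw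
    have hmeet : ∀ j, (sectionPart k (B j) t).Nonempty := fun j => by
      by_contra hj
      apply hsens j
      rw [hw, sectionCodeF_eq_true_iff]
      exact ⟨t, a, by rw [sectionOf_flipS, not_nonempty_iff_eq_empty.1 hj, flipS_empty, ht]⟩
    choose φ hφ using hmeet
    have hφinj :=
      injective_of_pairwise_disjoint (fun _ _ h => disjoint_sectionPart (hdisj h) t) hφ
    have hι : 1 ≤ Fintype.card ι := Fintype.card_pos_iff.2 ⟨a⟩
    calc Fintype.card κ ≤ 2*k+1 := by simpa using Fintype.card_le_of_injective φ hφinj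
      _ ≤ (2*k+1) * Fintype.card ι := Nat.le_mul_of_pos_right _ hι
  · have hmake : ∀ j, ∃ s a, flipS (sectionOf k w s) (sectionPart k (B j) s) = c a ∧
        (sectionPart k (B j) s).Nonempty := fun j => by
      have := hsens j
      rw [hw, ne_eq, Bool.not_eq_false, sectionCodeF_eq_true_iff] at this
      obtain ⟨s, a, hs⟩ := this
      rw [sectionOf_flipS] at hs
      refine ⟨s, a, hs, nonempty_iff_ne_empty.2 fun h => ?_⟩
      rw [h, flipS_empty] at hs
      exact sectionCodeF_eq_false_iff.1 hw s a hs
    choose s a hsa hne using hmake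
    -- two blocks turning the same section into the same codeword agree on that section
    have hinj : Injective fun j => (s j, a j) := fun j j' h => by
      obtain ⟨hs, ha⟩ := Prod.mk.inj h
      by_contra hjj
      have hpart : sectionPart k (B j) (s j) = sectionPart k (B j') (s j) :=
        flipS_injective _ ((hsa j).trans (ha ▸ hs ▸ hsa j').symm)
      obtain ⟨p, hp⟩ := hne j
      exact disjoint_left.1 (disjoint_sectionPart (hdisj hjj) (s j)) hp (hpart ▸ hp)
    simpa using Fintype.card_le_of_injective _ hinj

lemma isSensitiveBlocks_sectionCodeF_false (hones : ∀ a, (ones (c a)).Nonempty)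
    (hdisj : Pairwise (Disjoint on fun a => ones (c a))) :
    IsSensitiveBlocks (sectionCodeF k c) (fun _ => false)
      fun sa : Fin (2*k+1) × ι => (ones (c sa.2)).image (secIdx k sa.1) := by
  have hfalse : sectionCodeF k c (fun _ => false) = false :=
    sectionCodeF_eq_false_iff.2 fun s a h => by
      obtain ⟨p, hp⟩ := hones a
      simp [ones, ← h, sectionOf] at hp
  refine ⟨fun sa => (hones sa.2).image _, ?_, fun ⟨s, a⟩ => ?_⟩
  · rintro ⟨s, a⟩ ⟨s', b⟩ hne
    refine disjoint_left.2 fun i hi hi' => ?_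
    simp only [mem_image] at hi hi'
    obtain ⟨p, hp, rfl⟩ := hi
    obtain ⟨q, hq, hpq⟩ := hi'
    obtain ⟨rfl, rfl⟩ := secIdx_inj.1 hpq
    have hab : a ≠ b := fun hab => hne (hab ▸ rfl)
    exact disjoint_left.1 (hdisj hab.symm) hq hp
  · rw [hfalse, ne_eq, Bool.not_eq_false, sectionCodeF_eq_true_iff]
    exact ⟨s, a, by rw [sectionOf_flipS_image, update_self]; exact flipS_false_ones (c a)⟩

lemma bs_sectionCodeF (hones : ∀ a, (ones (c a)).Nonempty)
    (hdisj : Pairwise (Disjoint on fun a => ones (c a))) :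
    bs (sectionCodeF k c) = (2*k+1) * Fintype.card ι :=
  le_antisymm
    (Finset.sup_le fun _ _ => bsAt_le fun _ _ hB => by simpa using hB.card_le_of_sectionCodeF)
    (le_sup_of_le (mem_univ _) (by
      simpa using (isSensitiveBlocks_sectionCodeF_false (k := k) hones hdisj).le_bsAt))

end SectionCode

section GoodPatterns

variable {k : ℕ}

/-- Position `j` lies in cell `j / 2`: cell `i < k` is the pair `{2i, 2i+1}`, cell `k` is `{2k}`. -/
def goodPattern (k : ℕ) (i : Fin (k+1)) : Fin (2*k+1) → Bool :=
  fun j => decide (j.val / 2 = i.val)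

lemma goodSection_iff_exists_goodPattern (x : Fin (2*k+1) → Bool) :
    goodSection k x ↔ ∃ i, x = goodPattern k i := by
  constructor
  · rintro (⟨i, hi, hx⟩ | hx)
    · exact ⟨⟨i, by omega⟩, funext fun j => by
        simp only [hx j, goodPattern, decide_eq_decide]; omega⟩
    · exact ⟨Fin.last k, funext fun j => by
        rw [hx j, goodPattern, decide_eq_decide, Fin.val_last]; omega⟩
  · rintro ⟨i, rfl⟩
    rcases (Nat.lt_succ_iff.1 i.isLt).lt_or_eq with hi | hi
    · exact Or.inl ⟨i, hi, fun j => by rw [goodPattern, decide_eq_decide]; omega⟩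
    · exact Or.inr fun j => by rw [goodPattern, decide_eq_decide]; omega

lemma goodF_eq_sectionCodeF : goodF k = sectionCodeF k (goodPattern k) := by
  funext w
  simp [goodF, sectionCodeF, goodSection_iff_exists_goodPattern]

lemma mem_ones_goodPattern {i : Fin (k+1)} {j : Fin (2*k+1)} :
    j ∈ ones (goodPattern k i) ↔ j.val / 2 = i.val := by
  simp [ones, goodPattern]

lemma three_le_hammingDist_goodPattern {i i' : Fin (k+1)} (h : i ≠ i') :
    3 ≤ hammingDist (goodPattern k i) (goodPattern k i') := by
  wlog hlt : i < i' generalizing i i'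
  · rw [hammingDist_comm]
    exact this h.symm ((Ne.symm h).lt_of_le (not_lt.1 hlt))
  have hi : i.val < k := by omega
  rw [hammingDist, Nat.succ_le_iff, two_lt_card]
  refine ⟨⟨2 * i, by omega⟩, ?_, ⟨2 * i + 1, by omega⟩, ?_,
    ⟨2 * i', by omega⟩, ?_, ?_⟩ <;> simp [goodPattern, Fin.ext_iff] <;> omega

lemma pairwise_disjoint_ones_goodPattern :
    Pairwise (Disjoint on fun i => ones (goodPattern k i)) := fun _ _ h =>
  disjoint_left.2 fun _ hj hj' =>
    h (Fin.ext ((mem_ones_goodPattern.1 hj).symm.trans (mem_ones_goodPattern.1 hj')))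

lemma ones_goodPattern_nonempty (i : Fin (k+1)) : (ones (goodPattern k i)).Nonempty :=
  ⟨⟨2 * i, by have := i.isLt; omega⟩, mem_ones_goodPattern.2 (by simp)⟩

lemma sens_goodF : sens (goodF k) = 2*k+1 := by
  rw [goodF_eq_sectionCodeF]
  exact sens_sectionCodeF fun _ _ => three_le_hammingDist_goodPattern

lemma bs_goodF : bs (goodF k) = (2*k+1) * (k+1) := by
  rw [goodF_eq_sectionCodeF, bs_sectionCodeF ones_goodPattern_nonempty
    pairwise_disjoint_ones_goodPattern, Fintype.card_fin]

end GoodPatterns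

theorem stmt13 :
    ∃ F : (k : ℕ) → (Fin ((2*k+1)^2) → Bool) → Bool,
      Filter.Tendsto (fun k => sens (F k)) Filter.atTop Filter.atTop ∧
      ∀ k, (bs (F k) : ℚ) = (1/2) * (sens (F k))^2 + (1/2) * (sens (F k)) := by
  refine ⟨goodF, ?_, fun k => ?_⟩
  · simp only [sens_goodF]
    exact Filter.tendsto_atTop_mono (fun k => show k ≤ 2*k+1 by omega) Filter.tendsto_id
  · rw [bs_goodF, sens_goodF]
    push_cast
    ring
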